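/- arXiv:0804.2166 — 2 statements merged into one kernel-verified Lean document; each statement's English description precedes it below -/
import Mathlib

section
/- Any finite subgroup F of GL(n, ℤ) injects under reduction modulo 3 into GL(n, ℤ/3ℤ); in particular |F| ≤ |GL(n, ℤ/3ℤ)|. -/
/-!
Let `q` be an odd prime and let `g = 1 + B` be an integer matrix with `g ≡ 1 (mod q)` and
`g ^ p = 1` for a prime `p`. Expanding `(1 + B) ^ p = 1` gives
`p B = -∑_{2 ≤ m ≤ p} (p choose m) B ^ m`. If `q ^ k ∣ B` with `k ≥ 1`, every term on the right
is divisible by `q ^ (2k)`, so `q ^ (k + 1) ∣ p B`, and `q ^ (k + 1) ∣ B` when `p ≠ q`. When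
`p = q`, the terms are even divisible by `q ^ (k + 2)`, because `q ∣ (q choose m)` for `m < q`
and `qk ≥ k + 2` for `q ≥ 3`; cancelling `q` again gives `q ^ (k + 1) ∣ B`. Hence every power of
`q` divides `B`, so `B = 0`. An element of finite order `≠ 1` has a power of prime order, so the
kernel of reduction modulo `q` is torsion-free and meets every finite subgroup trivially.
-/

open Finset

section Ring

variable {R : Type*} [Ring R]

theorem mul_natCast_eq_neg_sum_of_one_add_pow_eq_one {p : ℕ} (hp : 0 < p) {B : R}
    (h : (1 + B) ^ p = 1) :
    B * p = -∑ m ∈ Ico 2 (p + 1), B ^ m * (p.choose m : R) := by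
  have hexp := (Commute.one_right B).add_pow p
  rw [add_comm B 1, h, range_eq_Ico, sum_eq_sum_Ico_succ_bot (by omega),
    sum_eq_sum_Ico_succ_bot (by omega)] at hexp
  simp only [pow_zero, pow_one, one_pow, mul_one, Nat.choose_zero_right,
    Nat.choose_one_right, Nat.cast_one, zero_add, Nat.reduceAdd, left_eq_add] at hexp
  exact eq_neg_of_add_eq_zero_left hexp

theorem natCast_pow_mul_dvd_pow_of_dvd {q k : ℕ} {B : R} (h : (q : R) ^ k ∣ B) (m : ℕ) :
    (q : R) ^ (k * m) ∣ B ^ m := by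
  obtain ⟨C, rfl⟩ := h
  rw [((Nat.cast_commute q C).pow_left k).mul_pow, pow_mul]
  exact dvd_mul_right _ _

theorem natCast_pow_succ_dvd_of_one_add_pow_eq_one_of_coprime {p q k : ℕ} (hp : 0 < p)
    (hpq : p.Coprime q) (hk : 1 ≤ k) {B : R} (h : (1 + B) ^ p = 1) (hB : (q : R) ^ k ∣ B) :
    (q : R) ^ (k + 1) ∣ B := by
  have hBp : (q : R) ^ (k + 1) ∣ B * p := by
    rw [mul_natCast_eq_neg_sum_of_one_add_pow_eq_one hp h]
    refine (dvd_sum fun m hm => ?_).neg_right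
    have hkm : (q : R) ^ (k + 1) ∣ (q : R) ^ (k * m) :=
      pow_dvd_pow _ (by nlinarith [(mem_Ico.mp hm).1])
    exact (hkm.trans (natCast_pow_mul_dvd_pow_of_dvd hB m)).mul_right _
  obtain ⟨a, b, hab⟩ := (Nat.Coprime.pow_right (k + 1) hpq).isCoprime
  have hbezout : B = B * p * a + (q : R) ^ (k + 1) * B * b := by
    have hab' : (p : R) * a + (q : R) ^ (k + 1) * b = 1 := by
      have := congrArg (Int.cast : ℤ → R) hab
      push_cast at this
      rwa [Int.cast_comm, Int.cast_comm] at this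
    rw [((Nat.cast_commute q B).pow_left (k + 1)).eq, mul_assoc, mul_assoc, ← mul_add, hab',
      mul_one]
  rw [hbezout]
  exact dvd_add (hBp.mul_right _) ((dvd_mul_right _ _).mul_right _)

theorem natCast_pow_succ_dvd_of_one_add_pow_eq_one_self [IsAddTorsionFree R] {q k : ℕ}
    (hq : q.Prime) (hq2 : q ≠ 2) (hk : 1 ≤ k) {B : R} (h : (1 + B) ^ q = 1)
    (hB : (q : R) ^ k ∣ B) : (q : R) ^ (k + 1) ∣ B := by
  have hBq : (q : R) ^ (k + 2) ∣ B * q := by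
    rw [mul_natCast_eq_neg_sum_of_one_add_pow_eq_one hq.pos h]
    refine (dvd_sum fun m hm => ?_).neg_right
    obtain ⟨hm2, hmq⟩ := mem_Ico.mp hm
    rcases (Nat.lt_succ_iff.mp hmq).lt_or_eq with hmq | hmq
    · obtain ⟨t, ht⟩ := hq.dvd_choose_self (by omega) hmq
      have hkm : (q : R) ^ (k + 1) ∣ (q : R) ^ (k * m) := pow_dvd_pow _ (by nlinarith)
      rw [ht, Nat.cast_mul, ← mul_assoc, ← Nat.cast_comm q (B ^ m), pow_succ']
      exact (mul_dvd_mul_left _ (hkm.trans (natCast_pow_mul_dvd_pow_of_dvd hB m))).mul_right _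
    · have hq3 : 3 ≤ q := by have := hq.two_le; omega
      have hkq : (q : R) ^ (k + 2) ∣ (q : R) ^ (k * q) := pow_dvd_pow _ (by nlinarith)
      rw [hmq, Nat.choose_self, Nat.cast_one, mul_one]
      exact hkq.trans (natCast_pow_mul_dvd_pow_of_dvd hB q)
  obtain ⟨C, hC⟩ := hBq
  refine ⟨C, nsmul_right_injective hq.ne_zero ?_⟩
  simp only [nsmul_eq_mul]
  rw [Nat.cast_comm, hC, pow_succ', mul_assoc]

theorem natCast_pow_succ_dvd_of_one_add_pow_eq_one [IsAddTorsionFree R] {p q k : ℕ}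
    (hp : p.Prime) (hq : q.Prime) (hq2 : q ≠ 2) (hk : 1 ≤ k) {B : R} (h : (1 + B) ^ p = 1)
    (hB : (q : R) ^ k ∣ B) : (q : R) ^ (k + 1) ∣ B := by
  rcases eq_or_ne p q with rfl | hpq
  · exact natCast_pow_succ_dvd_of_one_add_pow_eq_one_self hp hq2 hk h hB
  · exact natCast_pow_succ_dvd_of_one_add_pow_eq_one_of_coprime hp.pos
      ((Nat.coprime_primes hp hq).mpr hpq) hk h hB

theorem natCast_pow_dvd_of_one_add_pow_eq_one [IsAddTorsionFree R] {p q : ℕ}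
    (hp : p.Prime) (hq : q.Prime) (hq2 : q ≠ 2) {B : R} (h : (1 + B) ^ p = 1)
    (hB : (q : R) ∣ B) {k : ℕ} (hk : 1 ≤ k) : (q : R) ^ k ∣ B := by
  induction k, hk using Nat.le_induction with
  | base => simpa using hB
  | succ k hk ih => exact natCast_pow_succ_dvd_of_one_add_pow_eq_one hp hq hq2 hk h ih

end Ring

namespace Matrix

variable {ι : Type*} [Fintype ι] [DecidableEq ι]

theorem natCast_dvd_iff {α : Type*} [Semiring α] {d : ℕ} {B : Matrix ι ι α} :
    (d : Matrix ι ι α) ∣ B ↔ ∀ i j, (d : α) ∣ B i j := by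
  have hmul (C : Matrix ι ι α) (i j : ι) : ((d : Matrix ι ι α) * C) i j = d * C i j := by
    rw [← nsmul_eq_mul d C, smul_apply, nsmul_eq_mul]
  constructor
  · rintro ⟨C, rfl⟩ i j
    exact ⟨C i j, hmul C i j⟩
  · intro h
    choose C hC using h
    exact ⟨of C, ext fun i j => by rw [hmul, hC, of_apply]⟩

theorem eq_zero_of_forall_natCast_pow_dvd {q : ℕ} (hq : 1 < q) {B : Matrix ι ι ℤ}
    (h : ∀ k, 1 ≤ k → (q : Matrix ι ι ℤ) ^ k ∣ B) : B = 0 := by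
  ext i j
  by_contra hne
  have hk := Int.natAbs_pos.mpr hne
  have hdvd : ((q ^ (B i j).natAbs : ℕ) : ℤ) ∣ B i j := by
    have := h _ hk
    rw [← Nat.cast_pow] at this
    exact_mod_cast natCast_dvd_iff.mp this i j
  exact hne (Int.eq_zero_of_dvd_of_natAbs_lt_natAbs hdvd (by simpa using Nat.lt_pow_self hq))

namespace GeneralLinearGroup

variable {q : ℕ} {g : GL ι ℤ}

theorem natCast_dvd_sub_one_of_map_eq_one
    (hg : Units.map (Int.castRingHom (ZMod q)).mapMatrix.toMonoidHom g = 1) :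
    (q : Matrix ι ι ℤ) ∣ (g : Matrix ι ι ℤ) - 1 := by
  have hmap : (Int.castRingHom (ZMod q)).mapMatrix (g : Matrix ι ι ℤ) =
      (Int.castRingHom (ZMod q)).mapMatrix 1 := by
    rw [map_one]; exact congrArg Units.val hg
  refine natCast_dvd_iff.mpr fun i j => ?_
  rw [sub_apply]
  exact (ZMod.intCast_eq_intCast_iff_dvd_sub _ _ q).mp (congrFun (congrFun hmap i) j).symm

theorem eq_one_of_map_eq_one_of_pow_eq_one {p : ℕ} (hp : p.Prime) (hq : q.Prime) (hq2 : q ≠ 2)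
    (hg : Units.map (Int.castRingHom (ZMod q)).mapMatrix.toMonoidHom g = 1) (hgp : g ^ p = 1) :
    g = 1 := by
  have : IsAddTorsionFree (Matrix ι ι ℤ) := IsAddTorsionFree.of_isTorsionFree ℤ _
  have hpow : (1 + ((g : Matrix ι ι ℤ) - 1)) ^ p = 1 := by
    rw [add_sub_cancel, ← Units.val_pow_eq_pow_val, hgp, Units.val_one]
  have hB := eq_zero_of_forall_natCast_pow_dvd hq.one_lt fun k hk =>
    natCast_pow_dvd_of_one_add_pow_eq_one hp hq hq2 hpow
      (natCast_dvd_sub_one_of_map_eq_one hg) hk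
  exact Units.ext (sub_eq_zero.mp hB)

theorem eq_one_of_map_eq_one_of_isOfFinOrder (hq : q.Prime) (hq2 : q ≠ 2)
    (hg : Units.map (Int.castRingHom (ZMod q)).mapMatrix.toMonoidHom g = 1)
    (hfin : IsOfFinOrder g) : g = 1 := by
  by_contra hne
  have hp : (orderOf g).minFac.Prime := Nat.minFac_prime (mt orderOf_eq_one_iff.mp hne)
  have hord := orderOf_pow_orderOf_div hfin.orderOf_pos.ne' (orderOf g).minFac_dvd
  have hone := eq_one_of_map_eq_one_of_pow_eq_one hp hq hq2 (by rw [map_pow, hg, one_pow])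
    (hord ▸ pow_orderOf_eq_one _)
  rw [hone, orderOf_one] at hord
  exact hp.one_lt.ne hord

end GeneralLinearGroup

end Matrix

theorem MonoidHom.injOn_of_isOfFinOrder_of_map_eq_one {G H : Type*} [Group G] [Group H]
    (f : G →* H) (hf : ∀ g, f g = 1 → IsOfFinOrder g → g = 1) (F : Subgroup G) [Finite F] :
    Set.InjOn f F := by
  intro g hg h hh hgh
  have hfin : IsOfFinOrder (g * h⁻¹) :=
    F.subtype.isOfFinOrder (isOfFinOrder_of_finite (⟨g * h⁻¹, F.mul_mem hg (F.inv_mem hh)⟩ : F))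
  exact mul_inv_eq_one.mp (hf _ (by rw [map_mul, map_inv, hgh, mul_inv_cancel]) hfin)

/-- Minkowski's theorem: any finite subgroup `F` of `GL(n, ℤ)` injects under reduction
modulo `3` into `GL(n, ℤ/3ℤ)`; in particular `|F| ≤ |GL(n, ℤ/3ℤ)|`. -/
theorem finite_subgroup_GL_int_injects_mod_three (n : ℕ)
    (F : Subgroup (GL (Fin n) ℤ)) (hF : Finite F) :
    Set.InjOn (Units.map ((Int.castRingHom (ZMod 3)).mapMatrix.toMonoidHom))
        (F : Set (GL (Fin n) ℤ)) ∧
      Nat.card F ≤ Nat.card (GL (Fin n) (ZMod 3)) := by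
  have hinj := MonoidHom.injOn_of_isOfFinOrder_of_map_eq_one _
    (fun _ => Matrix.GeneralLinearGroup.eq_one_of_map_eq_one_of_isOfFinOrder
      Nat.prime_three (by norm_num)) F
  exact ⟨hinj, Nat.card_le_card_of_injective _ (Set.injOn_iff_injective.mp hinj)⟩
end

section
/- For k = ℚ and 0 < δ < 1, x ≥ 2, one has β_ℚ(x; δ) ≤ ((12x/δ) log(2x/δ))^{1/δ}, using the lower bound π(x) ≥ x/(6 log x) for x ≥ 2. -/
/-!
Put `A = (12x/δ) log(2x/δ)` and `T = A^{1/δ}`, so that `T^δ = A` and `log T = log A / δ`.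
Every prime `p ≤ T` contributes `p^{δ-1} ≥ T^{δ-1}`, hence the sum up to `T` is at least
`π(T) T^{δ-1}`. Chebyshev's bound `π(T) ≥ T / (4 log T)`, valid since `T ≥ A ≥ 20`, turns this into
`T^δ / (4 log T) = Aδ / (4 log A)`, and `log A ≤ 3 log(2x/δ)` makes it at least `x`.
With `π(T) ≥ T / (6 log T)` one would need `log A ≤ 2 log(2x/δ)`, which fails for small `2x/δ`.
-/

noncomputable section

/-- `β_ℚ(x; δ) = min{t ≥ 2 : Σ_{p ≤ t} p^{−1+δ} ≥ x}`, the sum running over the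
rational primes `p ≤ t`. -/
def betaQ (x δ : ℝ) : ℝ :=
  sInf {t : ℝ | 2 ≤ t ∧
    x ≤ ∑ᶠ p : ℕ, if p.Prime ∧ (p : ℝ) ≤ t then (p : ℝ) ^ (-1 + δ) else 0}

open Real Finset

lemma exp_one_mul_log_le {x : ℝ} (hx : 0 < x) : exp 1 * log x ≤ x := by
  have h := log_le_sub_one_of_pos (div_pos hx (exp_pos 1))
  rw [log_div hx.ne' (exp_pos 1).ne', log_exp] at h
  calc exp 1 * log x ≤ exp 1 * (x / exp 1) := by gcongr; linarith
    _ = x := mul_div_cancel₀ x (exp_pos 1).ne'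

lemma log_six_mul_mul_log_le {y : ℝ} (hy : 3 ≤ y) : log (6 * y * log y) ≤ 3 * log y := by
  have hy0 : 0 < y := by linarith
  have hlog : 0 < log y := log_pos (by linarith)
  have h2 : 2 * log y ≤ y := by nlinarith [exp_one_mul_log_le hy0, exp_one_gt_d9]
  calc log (6 * y * log y) ≤ log (y ^ 3) := log_le_log (by positivity) (by
        nlinarith [mul_le_mul_of_nonneg_left h2 (by linarith : 0 ≤ 3 * y),
          mul_nonneg (mul_nonneg hy0.le hy0.le) (sub_nonneg.2 hy)])
    _ = 3 * log y := by norm_num [log_pow]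

lemma div_four_mul_log_le_primeCounting_floor {t : ℝ} (ht : 20 ≤ t) :
    t / (4 * log t) ≤ ⌊t⌋₊.primeCounting := by
  have hlog : 0 < log t := log_pos (by linarith)
  have hnum : t / 4 ≤ (t - 1) * log 2 - log (t + 2) := by
    nlinarith [exp_one_mul_log_le (x := t + 2) (by linarith), log_nonneg (by linarith : 1 ≤ t + 2),
      exp_one_gt_d9, log_two_gt_d9]
  calc t / (4 * log t) = t / 4 / log t := (div_div t 4 (log t)).symm
    _ ≤ ((t - 1) * log 2 - log (t + 2)) / log t := by gcongr
    _ ≤ _ := Chebyshev.pi_ge' (by linarith)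

lemma finsum_prime_le_eq_sum_primesLE {M : Type*} [AddCommMonoid M] (f : ℕ → M) {t : ℝ}
    (ht : 0 ≤ t) :
    (∑ᶠ p : ℕ, if p.Prime ∧ (p : ℝ) ≤ t then f p else 0) = ∑ p ∈ Nat.primesLE ⌊t⌋₊, f p := by
  have hmem (p : ℕ) : p ∈ Nat.primesLE ⌊t⌋₊ ↔ p.Prime ∧ (p : ℝ) ≤ t := by
    rw [Nat.mem_primesLE, Nat.le_floor_iff ht, and_comm]
  rw [finsum_eq_sum_of_support_subset _ (s := Nat.primesLE ⌊t⌋₊)]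
  · exact sum_congr rfl fun p hp => if_pos ((hmem p).1 hp)
  · intro p hp
    by_contra h
    exact hp (if_neg (mt (hmem p).2 h))

lemma primeCounting_floor_mul_rpow_le_sum {t e : ℝ} (ht : 0 < t) (he : e ≤ 0) :
    ⌊t⌋₊.primeCounting * t ^ e ≤ ∑ p ∈ Nat.primesLE ⌊t⌋₊, (p : ℝ) ^ e := by
  rw [← Nat.primesLE_card_eq_primeCounting, ← nsmul_eq_mul, ← sum_const]
  refine sum_le_sum fun p hp => rpow_le_rpow_of_nonpos ?_ ?_ he
  · exact_mod_cast (Nat.prime_of_mem_primesLE hp).pos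
  · exact (Nat.le_floor_iff ht.le).1 (Nat.le_of_mem_primesLE hp)

lemma rpow_div_four_mul_log_le_finsum {t δ : ℝ} (ht : 20 ≤ t) (hδ : δ ≤ 1) :
    t ^ δ / (4 * log t) ≤
      ∑ᶠ p : ℕ, if p.Prime ∧ (p : ℝ) ≤ t then (p : ℝ) ^ (-1 + δ) else 0 := by
  have ht0 : 0 < t := by linarith
  rw [finsum_prime_le_eq_sum_primesLE _ ht0.le]
  calc t ^ δ / (4 * log t) = t / (4 * log t) * t ^ (-1 + δ) := by
        rw [rpow_add ht0, rpow_neg_one]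
        field_simp
    _ ≤ ⌊t⌋₊.primeCounting * t ^ (-1 + δ) := by
        gcongr
        exact div_four_mul_log_le_primeCounting_floor ht
    _ ≤ _ := primeCounting_floor_mul_rpow_le_sum ht0 (by linarith)

lemma betaQ_le_of_le_finsum {x δ t : ℝ} (ht : 2 ≤ t)
    (hsum : x ≤ ∑ᶠ p : ℕ, if p.Prime ∧ (p : ℝ) ≤ t then (p : ℝ) ^ (-1 + δ) else 0) :
    betaQ x δ ≤ t :=
  csInf_le ⟨2, fun _ hs => hs.1⟩ ⟨ht, hsum⟩

/-- For `k = ℚ`, `0 < δ < 1` and `x ≥ 2` one has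
`β_ℚ(x; δ) ≤ ((12x/δ) log(2x/δ))^{1/δ}` (proved using `π(x) ≥ x/(6 log x)`). -/
theorem betaQ_le (x δ : ℝ) (hx : 2 ≤ x) (hδ0 : 0 < δ) (hδ1 : δ < 1) :
    betaQ x δ ≤ ((12 * x / δ) * Real.log (2 * x / δ)) ^ (1 / δ) := by
  set y := 2 * x / δ
  set A := (12 * x / δ) * log y
  have hy : 4 ≤ y := by rw [le_div_iff₀ hδ0]; nlinarith
  have hlogy : 1 < log y := (lt_log_iff_exp_lt (by linarith)).2 (by linarith [exp_one_lt_d9])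
  have hA_eq : A = 6 * y * log y := by ring
  have hA : 20 ≤ A := by rw [hA_eq]; nlinarith
  have hlogA : log A ≤ 3 * log y := hA_eq ▸ log_six_mul_mul_log_le (by linarith)
  set T := A ^ (1 / δ)
  have hAT : A ≤ T := self_le_rpow_of_one_le (by linarith) (by rw [le_div_iff₀ hδ0]; linarith)
  have hTδ : T ^ δ = A := by rw [← rpow_mul (by linarith), one_div_mul_cancel hδ0.ne', rpow_one]
  have hlogT : log T = log A / δ := by rw [log_rpow (by linarith)]; ring
  have hlogA_pos : 0 < log A := log_pos (by linarith)
  refine betaQ_le_of_le_finsum (by linarith)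
    ((rpow_div_four_mul_log_le_finsum (by linarith) hδ1.le).trans' ?_)
  rw [hTδ, hlogT, le_div_iff₀ (by positivity)]
  calc x * (4 * (log A / δ)) ≤ x * (4 * (3 * log y / δ)) := by gcongr
    _ = A := by simp only [A]; field_simp; ring

end
end
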